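/- arXiv:2104.14872 — 7 statements merged into one kernel-verified Lean document; each statement's English description precedes it below -/
import Mathlib

section
/- Let M = [m_{ij}] be an m×n binary matrix whose k-th row is all 1's, i.e., m_{k1} = m_{k2} = ⋯ = m_{kn} = 1 for some k ∈ {1,…,m}. Let N be the (m−1)×(n+1) binary matrix obtained from M by deleting the k-th row and appending a column of all 0's on the right. Then the graph G(M) is isomorphic to the graph G(N). -/
/-- A word `w` over alphabet `V` represents the graph `G`: every vertex occurs in `w`,
and two distinct vertices are adjacent iff their letters alternate in `w`. -/
def WordRepresents {V : Type*} [DecidableEq V] (w : List V) (G : SimpleGraph V) : Prop :=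
  (∀ v : V, v ∈ w) ∧
  ∀ x y : V, x ≠ y →
    (G.Adj x y ↔ (w.filter (fun z => z == x || z == y)).Chain' (· ≠ ·))

/-- A graph is word-representable if some word represents it. -/
def WordRepresentable {V : Type*} [DecidableEq V] (G : SimpleGraph V) : Prop :=
  ∃ w : List V, WordRepresents w G

/-- The split graph `G(M)` of an `m × n` binary matrix `M`: vertices `Sum.inl j`
(`j : Fin n`) form a clique, vertices `Sum.inr i` (`i : Fin m`) form an independent set,
and `Sum.inr i` is adjacent to `Sum.inl j` iff `M i j = true`. -/
def splitGraph {m n : ℕ} (M : Fin m → Fin n → Bool) : SimpleGraph (Fin n ⊕ Fin m) :=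
  SimpleGraph.fromRel (fun x y =>
    match x, y with
    | Sum.inl _, Sum.inl _ => True
    | Sum.inl j, Sum.inr i => M i j = true
    | _, _ => False)

lemma splitGraph_adj_ll {m n : ℕ} (M : Fin m → Fin n → Bool) (j j' : Fin n) :
    (splitGraph M).Adj (Sum.inl j) (Sum.inl j') ↔ j ≠ j' := by
  simp [splitGraph]

lemma splitGraph_adj_lr {m n : ℕ} (M : Fin m → Fin n → Bool) (j : Fin n) (i : Fin m) :
    (splitGraph M).Adj (Sum.inl j) (Sum.inr i) ↔ M i j = true := by
  simp [splitGraph]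

lemma splitGraph_adj_rl {m n : ℕ} (M : Fin m → Fin n → Bool) (j : Fin n) (i : Fin m) :
    (splitGraph M).Adj (Sum.inr i) (Sum.inl j) ↔ M i j = true := by
  simp [splitGraph]

lemma splitGraph_adj_rr {m n : ℕ} (M : Fin m → Fin n → Bool) (i i' : Fin m) :
    ¬ (splitGraph M).Adj (Sum.inr i) (Sum.inr i') := by
  simp [splitGraph]

theorem stmt2 {m n : ℕ} (M : Fin (m + 1) → Fin n → Bool) (k : Fin (m + 1))
    (hk : ∀ j, M k j = true)
    (N : Fin m → Fin (n + 1) → Bool)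
    (hN : ∀ i j, N i j =
      if h : (j : ℕ) < n then M (k.succAbove i) ⟨j, h⟩ else false) :
    Nonempty (splitGraph M ≃g splitGraph N) := by
  classical
  have hNlast : ∀ i : Fin m, N i (Fin.last n) = false := by
    intro i; rw [hN]; simp
  have hNcast : ∀ (i : Fin m) (j : Fin n), N i j.castSucc = M (k.succAbove i) j := by
    intro i j; rw [hN]
    simp [j.isLt]
  let f : Fin n ⊕ Fin (m + 1) → Fin (n + 1) ⊕ Fin m := fun x =>
    match x with
    | Sum.inl j => Sum.inl j.castSucc
    | Sum.inr i =>
      match finSuccEquiv' k i with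
      | none => Sum.inl (Fin.last n)
      | some i' => Sum.inr i'
  let g : Fin (n + 1) ⊕ Fin m → Fin n ⊕ Fin (m + 1) := fun x =>
    match x with
    | Sum.inl j => if h : (j : ℕ) < n then Sum.inl ⟨j, h⟩ else Sum.inr k
    | Sum.inr i' => Sum.inr (k.succAbove i')
  have hgf : Function.LeftInverse g f := by
    rintro (j | i)
    · simp only [f, g, Fin.coe_castSucc]
      rw [dif_pos j.isLt]
    · simp only [f, g]
      rcases h : finSuccEquiv' k i with _ | i'
      · have h3 : i = k := by
          have := congrArg (finSuccEquiv' k).symm h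
          simpa using this
        simp [g, h3]
      · have h3 : k.succAbove i' = i := by
          have := congrArg (finSuccEquiv' k).symm h
          simpa using this.symm
        simp [g, h3]
  have hfg : Function.RightInverse g f := by
    rintro (j | i')
    · simp only [g]
      by_cases h : (j : ℕ) < n
      · rw [dif_pos h]
        simp only [f]
        congr 1
      · rw [dif_neg h]
        simp only [f, finSuccEquiv'_at]
        congr 1
        have : (j : ℕ) = n := le_antisymm (Nat.lt_succ_iff.mp j.isLt) (le_of_not_gt h)
        exact (Fin.ext this.symm)
    · simp only [f, g, finSuccEquiv'_succAbove]
  refine ⟨⟨⟨f, g, hgf, hfg⟩, ?_⟩⟩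
  rintro (j | i) (j' | i')
  · simp only [Equiv.coe_fn_mk, f]
    rw [splitGraph_adj_ll, splitGraph_adj_ll]
    simp [Fin.castSucc_inj]
  · simp only [Equiv.coe_fn_mk, f]
    rcases h : finSuccEquiv' k i' with _ | i''
    · have hik : i' = k := by
        have := congrArg (finSuccEquiv' k).symm h
        simpa using this
      rw [splitGraph_adj_ll, splitGraph_adj_lr, hik, hk]
      simp [Fin.ne_of_lt (Fin.castSucc_lt_last j)]
    · have hia : k.succAbove i'' = i' := by
        have := congrArg (finSuccEquiv' k).symm h
        simpa using this.symm
      rw [splitGraph_adj_lr, splitGraph_adj_lr, hNcast, hia]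
  · simp only [Equiv.coe_fn_mk, f]
    rcases h : finSuccEquiv' k i with _ | i''
    · have hik : i = k := by
        have := congrArg (finSuccEquiv' k).symm h
        simpa using this
      rw [splitGraph_adj_ll, splitGraph_adj_rl, hik, hk]
      simp [(Fin.ne_of_lt (Fin.castSucc_lt_last j')).symm]
    · have hia : k.succAbove i'' = i := by
        have := congrArg (finSuccEquiv' k).symm h
        simpa using this.symm
      rw [splitGraph_adj_rl, splitGraph_adj_rl, hNcast, hia]
  · simp only [Equiv.coe_fn_mk, f]
    rcases h1 : finSuccEquiv' k i with _ | a <;> rcases h2 : finSuccEquiv' k i' with _ | b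
    · have h3 : i = k := by simpa using congrArg (finSuccEquiv' k).symm h1
      have h4 : i' = k := by simpa using congrArg (finSuccEquiv' k).symm h2
      subst h3; subst h4
      exact iff_of_false (fun hc => (SimpleGraph.irrefl _) hc)
        (fun hc => (SimpleGraph.irrefl _) hc)
    · refine iff_of_false ?_ (splitGraph_adj_rr M i i')
      rw [splitGraph_adj_lr, hNlast]
      simp
    · refine iff_of_false ?_ (splitGraph_adj_rr M i i')
      rw [splitGraph_adj_rl, hNlast]
      simp
    · exact iff_of_false (splitGraph_adj_rr N a b) (splitGraph_adj_rr M i i')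
end

section
/- Let M be an m×n binary matrix. If there is a permutation of the columns of M after which every row of the resulting matrix has the form 0^r 1^s 0^t for some non-negative integers r, s, t (all 1's of the row are consecutive), then G(M) is word-representable. -/
/-!
The representing word is `A · R · B`. The sweeps `A` and `B` list the clique in the order
`τ 0, …, τ (n-1)` and insert each row `i` just before the clique letter at position `a i`
(in `A`), respectively `e i` (in `B`); `R` lists the rows in the reverse of their order in `A`.
Two clique letters occur in the same order in `A` and in `B`, so they alternate. Row `i` and the
clique letter at position `j` restrict to `(i c | c i) · i · (i c | c i)`, which alternates
exactly when `a i ≤ j < e i`. Two rows restrict to `u v` in `A` followed by `v u` in `R`, so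
they never alternate.
-/

namespace List

theorem flatMap_range_ite_pair {α : Type*} (u v : α) {N a b : ℕ} (ha : a < N) (hb : b < N) :
    (range N).flatMap (fun g => (if g = a then [u] else []) ++ (if g = b then [v] else [])) =
      if a ≤ b then [u, v] else [v, u] := by
  suffices ∀ N, (range N).flatMap (fun g => (if g = a then [u] else []) ++
      (if g = b then [v] else [])) = if a ≤ b then
        (if a < N then [u] else []) ++ (if b < N then [v] else [])
      else (if b < N then [v] else []) ++ (if a < N then [u] else []) by
    simp [this N, ha, hb]
  intro N
  induction N with
  | zero => simp
  | succ N ih =>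
    rw [range_succ, flatMap_append, ih, flatMap_singleton]
    split_ifs <;> first | omega | simp

theorem not_isChain_ne_append_reverse_append {α : Type*} {l : List α} (hl : l ≠ [])
    (l' : List α) : ¬ (l ++ l.reverse ++ l').IsChain (· ≠ ·) := by
  obtain ⟨l₀, z, rfl⟩ := eq_nil_or_concat' l |>.resolve_left hl
  intro h
  have : [z, z] <:+: (l₀ ++ [z]) ++ (l₀ ++ [z]).reverse ++ l' :=
    ⟨l₀, l₀.reverse ++ l', by simp⟩
  simpa using h.infix this

theorem Nodup.filter_and_beq_eq {α : Type*} [DecidableEq α] {l : List α} (hl : l.Nodup)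
    {i : α} (hi : i ∈ l) (P : α → Bool) :
    l.filter (fun i' => P i' && i' == i) = if P i then [i] else [] := by
  split_ifs with h
  · rw [filter_congr (q := (· == i)) (fun i' _ => by by_cases h' : i' = i <;> simp [h', h]),
      filter_beq, count_eq_one_of_mem hl hi]
    rfl
  · rw [filter_eq_nil_iff]
    intro i' _
    by_cases h' : i' = i <;> simp_all

end List

def pairRestrict {V : Type*} [DecidableEq V] (x y : V) (w : List V) : List V :=
  w.filter (fun z => z == x || z == y)

theorem pairRestrict_comm {V : Type*} [DecidableEq V] (x y : V) (w : List V) :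
    pairRestrict x y w = pairRestrict y x w := by
  simp only [pairRestrict, Bool.or_comm]

section Sweep

variable {m n : ℕ} (τ : Equiv.Perm (Fin n))

def sweep (κ : Fin m → ℕ) : List (Fin n ⊕ Fin m) :=
  (List.range (n + 1)).flatMap fun g =>
    ((List.finRange m).filter (κ · = g)).map Sum.inr ++
      if h : g < n then [Sum.inl (τ ⟨g, h⟩)] else []

theorem mem_sweep {κ : Fin m → ℕ} (hκ : ∀ i, κ i ≤ n) (v : Fin n ⊕ Fin m) :
    v ∈ sweep τ κ := by
  simp only [sweep, List.mem_flatMap, List.mem_range]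
  rcases v with c | i
  · exact ⟨τ.symm c, by omega, by simp⟩
  · exact ⟨κ i, Nat.lt_succ_of_le (hκ i), by simp⟩

theorem pairRestrict_sweep_inl_inl (κ : Fin m → ℕ) {j k : Fin n} (hjk : j ≠ k) :
    pairRestrict (.inl (τ j)) (.inl (τ k)) (sweep τ κ) =
      if (j : ℕ) ≤ k then [.inl (τ j), .inl (τ k)] else [.inl (τ k), .inl (τ j)] := by
  rw [pairRestrict, sweep, List.filter_flatMap,
    ← List.flatMap_range_ite_pair _ _ (Nat.lt_succ_of_lt j.isLt) (Nat.lt_succ_of_lt k.isLt)]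
  congr 1
  funext g
  rw [List.filter_append, List.filter_map, List.filter_eq_nil_iff.2 (by simp), List.map_nil,
    List.nil_append]
  split_ifs <;> simp_all [Fin.ext_iff]

theorem pairRestrict_sweep_inl_inr {κ : Fin m → ℕ} {i : Fin m} (hκ : κ i ≤ n) (j : Fin n) :
    pairRestrict (.inl (τ j)) (.inr i) (sweep τ κ) =
      if κ i ≤ j then [.inr i, .inl (τ j)] else [.inl (τ j), .inr i] := by
  rw [pairRestrict, sweep, List.filter_flatMap,
    ← List.flatMap_range_ite_pair _ _ (Nat.lt_succ_of_le hκ) (Nat.lt_succ_of_lt j.isLt)]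
  congr 1
  funext g
  rw [List.filter_append, List.filter_map, List.filter_filter]
  congr 1
  · rw [List.filter_congr (q := fun k => decide (κ k = g) && k == i)
        (fun k _ => by rw [Bool.eq_iff_iff]; simp [and_comm]),
      (List.nodup_finRange m).filter_and_beq_eq (List.mem_finRange i)]
    split_ifs <;> simp_all
  · split_ifs <;> simp_all [Fin.ext_iff]

def intervalWord (a e : Fin m → ℕ) : List (Fin n ⊕ Fin m) :=
  sweep τ a ++ ((sweep τ a).filter Sum.isRight).reverse ++ sweep τ e

theorem pairRestrict_intervalWord (a e : Fin m → ℕ) (x y : Fin n ⊕ Fin m) :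
    pairRestrict x y (intervalWord τ a e) =
      pairRestrict x y (sweep τ a) ++
        ((pairRestrict x y (sweep τ a)).filter Sum.isRight).reverse ++
          pairRestrict x y (sweep τ e) := by
  simp only [pairRestrict, intervalWord, List.filter_append, List.filter_reverse,
    List.filter_filter, Bool.and_comm]

theorem isChain_pairRestrict_intervalWord_inl_inl (a e : Fin m → ℕ) {j k : Fin n}
    (hjk : j ≠ k) :
    (pairRestrict (.inl (τ j)) (.inl (τ k)) (intervalWord τ a e)).IsChain (· ≠ ·) := by
  rw [pairRestrict_intervalWord, pairRestrict_sweep_inl_inl τ a hjk,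
    pairRestrict_sweep_inl_inl τ e hjk]
  split_ifs <;> simp [hjk, hjk.symm]

theorem isChain_pairRestrict_intervalWord_inl_inr_iff {a e : Fin m → ℕ} {i : Fin m}
    (ha : a i ≤ n) (he : e i ≤ n) (j : Fin n) :
    (pairRestrict (.inl (τ j)) (.inr i) (intervalWord τ a e)).IsChain (· ≠ ·) ↔
      a i ≤ j ∧ j < e i := by
  rw [pairRestrict_intervalWord, pairRestrict_sweep_inl_inr τ ha,
    pairRestrict_sweep_inl_inr τ he]
  split_ifs <;> simp [List.filter_cons] <;> omega

theorem not_isChain_pairRestrict_intervalWord_inr_inr {a : Fin m → ℕ} (ha : ∀ i, a i ≤ n)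
    (e : Fin m → ℕ) (i i' : Fin m) :
    ¬ (pairRestrict (.inr i) (.inr i') (intervalWord τ a e)).IsChain (· ≠ ·) := by
  rw [pairRestrict_intervalWord, List.filter_eq_self.2 fun z hz => ?_]
  · refine List.not_isChain_ne_append_reverse_append (List.ne_nil_of_mem (a := .inr i) ?_) _
    simp [pairRestrict, mem_sweep τ ha]
  · simp only [pairRestrict, List.mem_filter, Bool.or_eq_true, beq_iff_eq] at hz
    rcases hz.2 with rfl | rfl <;> rfl

end Sweep

theorem wordRepresents_intervalWord {m n : ℕ} (M : Fin m → Fin n → Bool)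
    (τ : Equiv.Perm (Fin n)) (a e : Fin m → ℕ) (ha : ∀ i, a i ≤ n) (he : ∀ i, e i ≤ n)
    (hM : ∀ i j, M i (τ j) = true ↔ a i ≤ j ∧ j < e i) :
    WordRepresents (intervalWord τ a e) (splitGraph M) := by
  refine ⟨fun v => List.mem_append_left _ (List.mem_append_left _ (mem_sweep τ ha v)),
    fun x y hxy => ?_⟩
  change _ ↔ (pairRestrict x y _).IsChain _
  rcases x with c | i <;> rcases y with c' | i'
  · obtain ⟨j, rfl⟩ := τ.surjective c
    obtain ⟨k, rfl⟩ := τ.surjective c'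
    have hjk : j ≠ k := by simpa using hxy
    simpa [splitGraph, hxy] using isChain_pairRestrict_intervalWord_inl_inl τ a e hjk
  · obtain ⟨j, rfl⟩ := τ.surjective c
    simpa [splitGraph, hM] using
      (isChain_pairRestrict_intervalWord_inl_inr_iff τ (ha i') (he i') j).symm
  · obtain ⟨j, rfl⟩ := τ.surjective c'
    rw [pairRestrict_comm]
    simpa [splitGraph, hM] using
      (isChain_pairRestrict_intervalWord_inl_inr_iff τ (ha i) (he i) j).symm
  · simpa [splitGraph] using not_isChain_pairRestrict_intervalWord_inr_inr τ ha e i i'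

theorem stmt3 {m n : ℕ} (M : Fin m → Fin n → Bool)
    (h : ∃ τ : Equiv.Perm (Fin n), ∀ i, ∃ r s t : ℕ, r + s + t = n ∧
      ∀ j : Fin n, M i (τ j) = true ↔ (r ≤ (j : ℕ) ∧ (j : ℕ) < r + s)) :
    WordRepresentable (splitGraph M) := by
  obtain ⟨τ, hτ⟩ := h
  choose r s t hsum hM using hτ
  exact ⟨_, wordRepresents_intervalWord M τ r (fun i => r i + s i) (fun i => by grind)
    (fun i => by grind) hM⟩
end

section
/- Let A be an m×n binary matrix. For every integer k ≥ 1, the graph G^k(A,A) is word-representable if and only if the graph G(A) is word-representable. -/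
/-- `morphIter A B k` is the matrix `M^k(A,B)`, obtained from the `1 × 1` matrix `[0]`
by `k` iterations of the 2-dimensional morphism replacing `0` by the block `A`
and `1` by the block `B`. -/
def morphIter {m n : ℕ} (A B : Fin m → Fin n → Bool) :
    (k : ℕ) → Fin (m ^ k) → Fin (n ^ k) → Bool
  | 0, _, _ => false
  | k + 1, i, j =>
    have hm : 0 < m := Nat.pos_of_ne_zero (fun h => by
      have := i.isLt; simp [h] at this)
    have hn : 0 < n := Nat.pos_of_ne_zero (fun h => by
      have := j.isLt; simp [h] at this)
    have hR : i.val / m < m ^ k :=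
      (Nat.div_lt_iff_lt_mul hm).2 (by rw [← pow_succ]; exact i.isLt)
    have hC : j.val / n < n ^ k :=
      (Nat.div_lt_iff_lt_mul hn).2 (by rw [← pow_succ]; exact j.isLt)
    if morphIter A B k ⟨i.val / m, hR⟩ ⟨j.val / n, hC⟩ then
      B ⟨i.val % m, Nat.mod_lt _ hm⟩ ⟨j.val % n, Nat.mod_lt _ hn⟩
    else
      A ⟨i.val % m, Nat.mod_lt _ hm⟩ ⟨j.val % n, Nat.mod_lt _ hn⟩

/-- `Gk A B k` is the split graph `G^k(A,B) = G(M^k(A,B))`. -/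
def Gk {m n : ℕ} (A B : Fin m → Fin n → Bool) (k : ℕ) :
    SimpleGraph (Fin (n ^ k) ⊕ Fin (m ^ k)) :=
  splitGraph (morphIter A B k)

/-!
Since both blocks equal `A`, the entry of `M^k(A,A)` at `(i, j)` is the entry of `A` at the
residues `(i mod m, j mod n)`. Hence `G^k(A,A)` is the blow-up of `G(A)` that replaces every
clique vertex by a clique and every independent vertex by an independent set, with adjacency
between different fibres inherited from `G(A)`.

`G(A)` is an induced subgraph of this blow-up, and deleting letters from a representing word
represents induced subgraphs. Conversely, take a word `w` representing `G(A)` and append its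
final permutation, so that every letter occurs at least twice. Replacing each occurrence of a
letter by a listing of its fibre, listed backwards in the final permutation for independent
fibres, gives a word in which two copies of a clique vertex alternate, two copies of an
independent vertex do not, and copies of distinct vertices alternate exactly when the
originals do.
-/

namespace List
variable {α β : Type*}

theorem isChain_ne_map_iff {f : α → β} {l : List α} (hf : Set.InjOn f {a | a ∈ l}) :
    (l.map f).IsChain (· ≠ ·) ↔ l.IsChain (· ≠ ·) := by
  rw [isChain_map]
  exact IsChain.iff_of_mem_imp fun a b ha hb => hf.ne_iff ha hb

theorem isChain_ne_flatten_replicate_pair {a b : α} (hab : a ≠ b) :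
    ∀ t, ((replicate t [a, b]).flatten).IsChain (· ≠ ·)
  | 0 => isChain_nil
  | 1 => by simpa using hab
  | t + 2 => by
    have ih := isChain_ne_flatten_replicate_pair hab (t + 1)
    simp only [replicate_succ, flatten_cons, cons_append, nil_append] at ih ⊢
    exact .cons_cons hab (.cons_cons hab.symm ih)

theorem isChain_ne_flatten_replicate_pair_append_iff {a b : α} (hab : a ≠ b) {t : ℕ}
    (ht : t ≠ 0) (c : Prop) [Decidable c] :
    ((replicate t [a, b]).flatten ++ if c then [a, b] else [b, a]).IsChain (· ≠ ·) ↔ c := by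
  by_cases hc : c
  · have h := isChain_ne_flatten_replicate_pair hab (t + 1)
    rw [replicate_succ', flatten_append, flatten_singleton] at h
    simpa [hc] using h
  · obtain ⟨t, rfl⟩ := Nat.exists_eq_succ_of_ne_zero ht
    simp only [hc, if_false, iff_false]
    intro h
    have hbb : [b, b] <:+: (replicate (t + 1) [a, b]).flatten ++ [b, a] :=
      ⟨(replicate t [a, b]).flatten ++ [a], [a], by simp [replicate_succ']⟩
    exact (isChain_pair.1 (h.infix hbb)) rfl

theorem Nodup.eq_singleton {l : List α} {a : α} (hl : l.Nodup) (h : ∀ z, z ∈ l ↔ z = a) :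
    l = [a] :=
  perm_singleton.1 <| (perm_ext_iff_of_nodup hl (nodup_singleton a)).2 <| by simpa using h

theorem Nodup.eq_pair {l : List α} {a b : α} (hl : l.Nodup) (hab : a ≠ b)
    (h : ∀ z, z ∈ l ↔ z = a ∨ z = b) : l = [a, b] ∨ l = [b, a] :=
  perm_pair.1 <| (perm_ext_iff_of_nodup hl (by simpa using hab)).2 <| by simpa using h

variable [DecidableEq α]

theorem getLast?_dedup (l : List α) : l.dedup.getLast? = l.getLast? := by
  induction l with
  | nil => rfl
  | cons a t ih =>
    by_cases h : a ∈ t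
    · rw [dedup_cons_of_mem h, ih, getLast?_cons, getLast?_eq_some_getLast (ne_nil_of_mem h)]
      rfl
    · rw [dedup_cons_of_notMem h, getLast?_cons, getLast?_cons, ih]

theorem filter_dedup (p : α → Bool) (l : List α) : l.dedup.filter p = (l.filter p).dedup := by
  induction l with
  | nil => rfl
  | cons a t ih =>
    by_cases h : a ∈ t <;> by_cases hp : p a <;>
      simp [dedup_cons_of_mem, dedup_cons_of_notMem, h, hp, ih, mem_filter]

theorem flatMap_eq_flatten_replicate_count {g : α → List β} {a : α}
    (hg : ∀ b ≠ a, g b = []) (l : List α) :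
    l.flatMap g = (replicate (l.count a) (g a)).flatten := by
  induction l with
  | nil => rfl
  | cons b t ih =>
    by_cases hb : b = a
    · subst hb; simp [ih, replicate_succ]
    · simp [ih, hg b hb, hb]

end List

open List

section WordRepresentation
variable {V W : Type*} [DecidableEq V]

def pairSubword (w : List V) (x y : V) : List V := w.filter (fun z => z == x || z == y)

@[simp]
theorem mem_pairSubword {w : List V} {x y z : V} :
    z ∈ pairSubword w x y ↔ z ∈ w ∧ (z = x ∨ z = y) := by
  simp [pairSubword]

theorem pairSubword_append (w w' : List V) (x y : V) :
    pairSubword (w ++ w') x y = pairSubword w x y ++ pairSubword w' x y :=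
  filter_append _ _

theorem pairSubword_reverse (w : List V) (x y : V) :
    pairSubword w.reverse x y = (pairSubword w x y).reverse :=
  filter_reverse

theorem pairSubword_flatMap {β : Type*} (l : List β) (g : β → List V) (x y : V) :
    pairSubword (l.flatMap g) x y = l.flatMap fun b => pairSubword (g b) x y :=
  filter_flatMap

theorem wordRepresents_iff {w : List V} {G : SimpleGraph V} :
    WordRepresents w G ↔ (∀ v, v ∈ w) ∧
      ∀ x y, x ≠ y → (G.Adj x y ↔ (pairSubword w x y).IsChain (· ≠ ·)) :=
  Iff.rfl

theorem injOn_pairSubword {f : V → W} {w : List V} {x y : V} (hxy : f x ≠ f y) :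
    Set.InjOn f {z | z ∈ pairSubword w x y} := by
  rintro a ha b hb hab
  simp only [Set.mem_ofPred_eq, mem_pairSubword] at ha hb
  rcases ha.2 with rfl | rfl <;> rcases hb.2 with rfl | rfl <;> first | rfl | simp_all

theorem isChain_pairSubword_append_dedup_iff {w : List V} {x y : V} (hxy : x ≠ y)
    (hx : x ∈ w) (hy : y ∈ w) :
    (pairSubword (w ++ w.dedup) x y).IsChain (· ≠ ·) ↔
      (pairSubword w x y).IsChain (· ≠ ·) := by
  set u := pairSubword w x y
  have hu : pairSubword (w ++ w.dedup) x y = u ++ u.dedup := by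
    rw [pairSubword_append]
    exact congrArg (u ++ ·) (filter_dedup _ w)
  have hlast := getLast?_dedup u
  rw [hu, isChain_append]
  have hmem : ∀ z, z ∈ u.dedup ↔ z = x ∨ z = y := fun z => by
    rw [mem_dedup, mem_pairSubword]
    exact ⟨And.right, fun h => ⟨h.elim (· ▸ hx) (· ▸ hy), h⟩⟩
  obtain hd | hd := (nodup_dedup u).eq_pair hxy hmem <;>
  · rw [hd] at hlast ⊢
    simp [← hlast, hxy, hxy.symm]

end WordRepresentation

section Embedding
variable {V W : Type*} [DecidableEq V] [DecidableEq W] {G : SimpleGraph V} {H : SimpleGraph W}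

theorem map_pairSubword_filterMap_partialInv {e : V → W} (he : Function.Injective e)
    (w : List W) (x y : V) :
    (pairSubword (w.filterMap (Function.partialInv e)) x y).map e =
      pairSubword w (e x) (e y) := by
  induction w with
  | nil => rfl
  | cons a t ih =>
    by_cases ha : ∃ v, e v = a
    · obtain ⟨v, rfl⟩ := ha
      rw [filterMap_cons_some (Function.partialInv_left he v)]
      by_cases hv : v = x ∨ v = y <;> simp_all [pairSubword, he.eq_iff]
    · have hnone : Function.partialInv e a = none := by
        simpa [Function.partialInv] using ha
      rw [filterMap_cons_none hnone, ih]
      have : ¬(a = e x ∨ a = e y) := by rintro (rfl | rfl) <;> exact ha ⟨_, rfl⟩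
      simp [pairSubword, this]

theorem WordRepresents.comap (e : G ↪g H) {w : List W} (hw : WordRepresents w H) :
    WordRepresents (w.filterMap (Function.partialInv e)) G := by
  rw [wordRepresents_iff] at hw ⊢
  refine ⟨fun v => mem_filterMap.2 ⟨e v, hw.1 _, Function.partialInv_left e.injective v⟩,
    fun x y hxy => ?_⟩
  rw [← e.map_adj_iff, hw.2 _ _ (e.injective.ne hxy), ← isChain_ne_map_iff e.injective.injOn,
    map_pairSubword_filterMap_partialInv e.injective]

theorem WordRepresentable.comap (e : G ↪g H) (h : WordRepresentable H) :
    WordRepresentable G :=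
  let ⟨_, hw⟩ := h; ⟨_, hw.comap e⟩

end Embedding

section Blowup
variable {V W : Type*} {G : SimpleGraph V} {H : SimpleGraph W} {f : W → V} {C : V → Prop}
  {g : V → List W}

/-- `H` arises from `G` by replacing each vertex `v` with the fibre `f⁻¹ v`, a clique when `C v`
and an independent set otherwise. -/
def IsBlowup (H : SimpleGraph W) (G : SimpleGraph V) (f : W → V) (C : V → Prop) : Prop :=
  ∀ x y, H.Adj x y ↔ x ≠ y ∧ (G.Adj (f x) (f y) ∨ f x = f y ∧ C (f x))

def IsBlowup.embedding (hH : IsBlowup H G f C) {s : V → W} (hs : Function.LeftInverse f s) :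
    G ↪g H where
  toFun := s
  inj' := hs.injective
  map_rel_iff' {u v} := by
    change H.Adj (s u) (s v) ↔ _
    rw [hH, hs u, hs v]
    exact ⟨fun h => h.2.resolve_right fun h' => h.1 (congrArg s h'.1), fun h =>
      ⟨hs.injective.ne h.ne, .inl h⟩⟩

def EnumeratesFibers (f : W → V) (g : V → List W) : Prop :=
  ∀ v, (g v).Nodup ∧ ∀ z, z ∈ g v ↔ f z = v

theorem EnumeratesFibers.ite {g' : V → List W} (hg : EnumeratesFibers f g)
    (hg' : EnumeratesFibers f g') (p : V → Prop) [DecidablePred p] :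
    EnumeratesFibers f fun v => if p v then g v else g' v := by
  intro v
  by_cases hp : p v
  · simpa [hp] using hg v
  · simpa [hp] using hg' v

theorem EnumeratesFibers.reverse (hg : EnumeratesFibers f g) :
    EnumeratesFibers f fun v => (g v).reverse :=
  fun v => ⟨nodup_reverse.2 (hg v).1, fun z => mem_reverse.trans ((hg v).2 z)⟩

theorem EnumeratesFibers.pairSubword_eq_pair [DecidableEq W] (hg : EnumeratesFibers f g)
    {x y : W} (hxy : x ≠ y) (hf : f x = f y) :
    pairSubword (g (f x)) x y = [x, y] ∨ pairSubword (g (f x)) x y = [y, x] :=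
  ((hg _).1.filter _).eq_pair hxy fun z => by
    change z ∈ pairSubword _ x y ↔ _
    rw [mem_pairSubword, (hg _).2]
    exact ⟨And.right, fun h => ⟨h.elim (· ▸ rfl) (· ▸ hf.symm), h⟩⟩

variable [DecidableEq V]

noncomputable def fiberList [Fintype W] (f : W → V) (v : V) : List W :=
  (Finset.univ.filter fun z => f z = v).toList

theorem enumeratesFibers_fiberList [Fintype W] (f : W → V) : EnumeratesFibers f (fiberList f) :=
  fun _ => ⟨Finset.nodup_toList _, fun _ => by simp [fiberList]⟩

variable [DecidableEq W]

theorem EnumeratesFibers.map_pairSubword (hg : EnumeratesFibers f g)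
    {x y : W} (hxy : f x ≠ f y) (v : V) :
    (pairSubword (g v) x y).map f = pairSubword [v] (f x) (f y) := by
  have hnd : (pairSubword (g v) x y).Nodup := (hg v).1.filter _
  have hmem : ∀ z, z ∈ pairSubword (g v) x y ↔ z = x ∧ f x = v ∨ z = y ∧ f y = v := by
    intro z
    rw [mem_pairSubword, (hg v).2]
    constructor
    · rintro ⟨rfl, rfl | rfl⟩ <;> simp
    · rintro (⟨rfl, rfl⟩ | ⟨rfl, rfl⟩) <;> simp
  by_cases hvx : f x = v
  · subst hvx
    rw [hnd.eq_singleton (a := x) fun z => by simp [hmem, Ne.symm hxy]]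
    simp [pairSubword]
  by_cases hvy : f y = v
  · subst hvy
    rw [hnd.eq_singleton (a := y) fun z => by simp [hmem, hvx]]
    simp [pairSubword]
  · rw [eq_nil_iff_forall_not_mem (l := pairSubword _ _ _) |>.2 fun z => by simp [hmem, hvx, hvy]]
    simp [pairSubword, Ne.symm hvx, Ne.symm hvy]

theorem EnumeratesFibers.map_pairSubword_flatMap (hg : EnumeratesFibers f g)
    {x y : W} (hxy : f x ≠ f y) (l : List V) :
    (pairSubword (l.flatMap g) x y).map f = pairSubword l (f x) (f y) := by
  conv_rhs => rw [← flatMap_singleton' l, pairSubword_flatMap]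
  rw [pairSubword_flatMap, map_flatMap]
  simp only [hg.map_pairSubword hxy]

theorem EnumeratesFibers.pairSubword_flatMap_of_eq (hg : EnumeratesFibers f g) {x y : W}
    (hf : f x = f y) (l : List V) :
    pairSubword (l.flatMap g) x y =
      (replicate (l.count (f x)) (pairSubword (g (f x)) x y)).flatten := by
  rw [pairSubword_flatMap, flatMap_eq_flatten_replicate_count]
  intro v hv
  refine eq_nil_iff_forall_not_mem.2 fun z hz => hv ?_
  rw [mem_pairSubword, (hg v).2] at hz
  obtain ⟨rfl, rfl | rfl⟩ := hz
  exacts [rfl, hf.symm]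

/-- Listing the independent fibres backwards in the appended final permutation is what destroys
the alternation inside them. -/
noncomputable def blowupWord [Fintype W] (f : W → V) (C : V → Prop) [DecidablePred C]
    (w : List V) : List W :=
  w.flatMap (fiberList f) ++
    w.dedup.flatMap fun v => if C v then fiberList f v else (fiberList f v).reverse

theorem WordRepresents.blowup [Fintype W] [DecidablePred C] (hH : IsBlowup H G f C) {w : List V}
    (hw : WordRepresents w G) : WordRepresents (blowupWord f C w) H := by
  rw [wordRepresents_iff] at hw ⊢
  have hg := enumeratesFibers_fiberList f
  have hg' := hg.ite hg.reverse C
  refine ⟨fun z => mem_append_left _ (mem_flatMap.2 ⟨f z, hw.1 _, ((hg _).2 z).2 rfl⟩),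
    fun x y hxy => ?_⟩
  rw [hH x y]
  by_cases hf : f x = f y
  · rw [blowupWord, pairSubword_append, hg.pairSubword_flatMap_of_eq hf,
      hg'.pairSubword_flatMap_of_eq hf, count_dedup, if_pos (hw.1 _), replicate_one,
      flatten_singleton]
    have hn : count (f x) w ≠ 0 := (count_pos_iff.2 (hw.1 _)).ne'
    rw [apply_ite (pairSubword · x y), pairSubword_reverse]
    rcases hg.pairSubword_eq_pair hxy hf with hB | hB <;>
      simp only [hB, reverse_cons, reverse_nil, nil_append, cons_append]
    · rw [isChain_ne_flatten_replicate_pair_append_iff hxy hn]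
      simp [hxy, hf]
    · rw [isChain_ne_flatten_replicate_pair_append_iff hxy.symm hn]
      simp [hxy, hf]
  · rw [← isChain_ne_map_iff (injOn_pairSubword hf), blowupWord, pairSubword_append, map_append,
      hg.map_pairSubword_flatMap hf, hg'.map_pairSubword_flatMap hf, ← pairSubword_append,
      isChain_pairSubword_append_dedup_iff hf (hw.1 _) (hw.1 _), ← hw.2 _ _ hf]
    simp [hxy, hf]

theorem WordRepresentable.blowup [Fintype W] [DecidablePred C] (hH : IsBlowup H G f C)
    (h : WordRepresentable G) : WordRepresentable H :=
  let ⟨_, hw⟩ := h; ⟨_, hw.blowup hH⟩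

end Blowup

section SplitGraph
variable {m n : ℕ}

theorem morphIter_self_succ (A : Fin m → Fin n → Bool) (k : ℕ) (i : Fin (m ^ (k + 1)))
    (j : Fin (n ^ (k + 1))) :
    morphIter A A (k + 1) i j =
      A (i.cast (pow_succ m k)).modNat (j.cast (pow_succ n k)).modNat := by
  simp only [morphIter, ite_self]
  rfl

def splitClass (k : ℕ) : Fin (n ^ (k + 1)) ⊕ Fin (m ^ (k + 1)) → Fin n ⊕ Fin m :=
  Sum.map (fun j => (j.cast (pow_succ n k)).modNat) (fun i => (i.cast (pow_succ m k)).modNat)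

def splitIncl (k : ℕ) : Fin n ⊕ Fin m → Fin (n ^ (k + 1)) ⊕ Fin (m ^ (k + 1)) :=
  Sum.map (Fin.castLE (Nat.le_self_pow k.succ_ne_zero n))
    (Fin.castLE (Nat.le_self_pow k.succ_ne_zero m))

theorem splitClass_leftInverse_splitIncl (k : ℕ) :
    Function.LeftInverse (splitClass (m := m) (n := n) k) (splitIncl k) := by
  rintro (j | i) <;> simp [splitClass, splitIncl, Fin.ext_iff, Nat.mod_eq_of_lt]

theorem isBlowup_gk (A : Fin m → Fin n → Bool) (k : ℕ) :
    IsBlowup (Gk A A (k + 1)) (splitGraph A) (splitClass k) (fun v => v.isLeft) := by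
  rintro (j | i) (j' | i') <;>
    simp [Gk, splitGraph, splitClass, morphIter_self_succ, SimpleGraph.fromRel_adj, em']

end SplitGraph

theorem stmt5 {m n : ℕ} (A : Fin m → Fin n → Bool) (k : ℕ) (hk : 1 ≤ k) :
    WordRepresentable (Gk A A k) ↔ WordRepresentable (splitGraph A) := by
  obtain ⟨k, rfl⟩ := Nat.exists_eq_add_of_le' hk
  have hblowup := isBlowup_gk A k
  exact ⟨.comap (hblowup.embedding (splitClass_leftInverse_splitIncl k)), .blowup hblowup⟩
end

section
/- Let A and B be m×n binary matrices. If every row of both A and B consists entirely of 0's or entirely of 1's, or if every column of both A and B consists entirely of 0's or entirely of 1's, then G^k(A,B) is word-representable for every integer k ≥ 0. -/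
/-!
If `A` and `B` have constant rows, then so does every `M^k(A,B)`, by induction on `k`; transposing
handles constant columns. In both cases `M^k(A,B)` is a rank-one Boolean matrix `f i && g j`. Its
split graph is represented by the word `T P S Pᴿ Z Zᴿ`, where `S`/`T` list the clique vertices `j`
with `g j` true/false and `P`/`Z` the independent vertices `i` with `f i` true/false: the letters of
`P` alternate exactly with those of `S`, and the palindromes `P Pᴿ`, `Z Zᴿ` rule out every other
alternation. Since this word construction commutes with filtering, alternation of two letters
only has to be checked on the word built from a two-letter list.
-/

theorem morphIter_succ {m n : ℕ} (A B : Fin m → Fin n → Bool) (k : ℕ)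
    (i : Fin (m ^ k * m)) (j : Fin (n ^ k * n)) :
    morphIter A B (k + 1) i j =
      if morphIter A B k i.divNat j.divNat then B i.modNat j.modNat else A i.modNat j.modNat :=
  rfl

theorem morphIter_transpose {m n : ℕ} (A B : Fin m → Fin n → Bool) (k : ℕ) :
    morphIter (fun j i => A i j) (fun j i => B i j) k = fun j i => morphIter A B k i j := by
  induction k with
  | zero => rfl
  | succ k ih =>
    funext (j : Fin (n ^ k * n)) (i : Fin (m ^ k * m))
    rw [morphIter_succ, morphIter_succ, ih]

def HasConstantRows {ι κ : Type*} (M : ι → κ → Bool) : Prop :=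
  ∀ i j j', M i j = M i j'

theorem hasConstantRows_of_forall_or {ι κ : Type*} {M : ι → κ → Bool}
    (h : ∀ i, (∀ j, M i j = false) ∨ (∀ j, M i j = true)) : HasConstantRows M := by
  intro i j j'
  rcases h i with h | h <;> rw [h, h]

theorem HasConstantRows.exists_eq {ι κ : Type*} {M : ι → κ → Bool} (hM : HasConstantRows M) :
    ∃ f : ι → Bool, ∀ i j, M i j = f i := by
  classical
  refine ⟨fun i => decide (∀ j, M i j = true), fun i j => ?_⟩
  cases hij : M i j
  · exact (decide_eq_false fun h => by simp [h j] at hij).symm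
  · exact (decide_eq_true fun j' => hM i j' j ▸ hij).symm

theorem HasConstantRows.morphIter {m n : ℕ} {A B : Fin m → Fin n → Bool}
    (hA : HasConstantRows A) (hB : HasConstantRows B) (k : ℕ) :
    HasConstantRows (morphIter A B k) := by
  induction k with
  | zero => intro _ _ _; rfl
  | succ k ih =>
    intro (i : Fin (m ^ k * m)) (j : Fin (n ^ k * n)) (j' : Fin (n ^ k * n))
    rw [morphIter_succ, morphIter_succ, ih i.divNat j.divNat j'.divNat]
    split
    · exact hB _ _ _
    · exact hA _ _ _

theorem List.Nodup.filter_beq_or_beq_eq_pair {α : Type*} [DecidableEq α] {l : List α}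
    (hl : l.Nodup) {x y : α} (hx : x ∈ l) (hy : y ∈ l) (hxy : x ≠ y) :
    l.filter (fun z => z == x || z == y) = [x, y] ∨
      l.filter (fun z => z == x || z == y) = [y, x] := by
  rw [← List.perm_pair, List.perm_ext_iff_of_nodup (hl.filter _) (by simpa using hxy)]
  intro z
  simp only [List.mem_filter, Bool.or_eq_true, beq_iff_eq, List.mem_cons, List.not_mem_nil,
    or_false]
  constructor
  · exact fun h => h.2
  · rintro (rfl | rfl) <;> simp_all

theorem wordRepresentable_of_filter_comm {V : Type*} [Fintype V] [DecidableEq V]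
    (G : SimpleGraph V) (F : List V → List V)
    (hF : ∀ l (p : V → Bool), (F l).filter p = F (l.filter p))
    (hmem : ∀ v, v ∈ F [v])
    (hpair : ∀ a b, a ≠ b → (G.Adj a b ↔ (F [a, b]).IsChain (· ≠ ·))) :
    WordRepresentable G := by
  set L := (Finset.univ : Finset V).toList
  have hL : L.Nodup := Finset.nodup_toList _
  refine ⟨F L, fun v => ?_, fun x y hxy => ?_⟩
  · have hv : L.filter (· == v) = [v] := by
      rw [List.filter_beq, List.count_eq_one_of_mem hL (by simp [L]), List.replicate_one]
    exact List.mem_of_mem_filter (p := (· == v)) (by rw [hF, hv]; exact hmem v)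
  · rw [hF]
    rcases hL.filter_beq_or_beq_eq_pair (by simp [L]) (by simp [L]) hxy with h | h <;> rw [h]
    · exact hpair x y hxy
    · rw [G.adj_comm]
      exact hpair y x hxy.symm

def rankOneWord {m n : ℕ} (f : Fin m → Bool) (g : Fin n → Bool)
    (l : List (Fin n ⊕ Fin m)) : List (Fin n ⊕ Fin m) :=
  let T := l.filter (Sum.elim (fun j => !g j) fun _ => false)
  let S := l.filter (Sum.elim g fun _ => false)
  let P := l.filter (Sum.elim (fun _ => false) f)
  let Z := l.filter (Sum.elim (fun _ => false) fun i => !f i)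
  T ++ P ++ S ++ P.reverse ++ Z ++ Z.reverse

theorem rankOneWord_filter {m n : ℕ} (f : Fin m → Bool) (g : Fin n → Bool)
    (l : List (Fin n ⊕ Fin m)) (p : Fin n ⊕ Fin m → Bool) :
    (rankOneWord f g l).filter p = rankOneWord f g (l.filter p) := by
  simp only [rankOneWord, List.filter_append, List.filter_reverse, List.filter_filter,
    Bool.and_comm]

theorem splitGraph_wordRepresentable_of_eq_and {m n : ℕ} {M : Fin m → Fin n → Bool}
    (f : Fin m → Bool) (g : Fin n → Bool) (hM : ∀ i j, M i j = (f i && g j)) :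
    WordRepresentable (splitGraph M) := by
  obtain rfl : M = fun i j => f i && g j := funext fun i => funext (hM i)
  refine wordRepresentable_of_filter_comm _ (rankOneWord f g) (rankOneWord_filter f g) ?_ ?_
  · rintro (j | i)
    · cases g j <;> simp [rankOneWord, *]
    · cases f i <;> simp [rankOneWord, *]
  · rintro (j | i) (j' | i') hab
    · have hab' := Ne.symm hab
      cases hg : g j <;> cases hg' : g j' <;>
        simp_all [rankOneWord, splitGraph, List.isChain_cons_cons]
    · cases hg : g j <;> cases hf' : f i' <;>
        simp_all [rankOneWord, splitGraph, List.isChain_cons_cons]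
    · cases hf : f i <;> cases hg' : g j' <;>
        simp_all [rankOneWord, splitGraph, List.isChain_cons_cons]
    · cases hf : f i <;> cases hf' : f i' <;>
        simp_all [rankOneWord, splitGraph, List.isChain_cons_cons]

theorem stmt7 {m n : ℕ} (A B : Fin m → Fin n → Bool)
    (h : ((∀ i, (∀ j, A i j = false) ∨ (∀ j, A i j = true)) ∧
          (∀ i, (∀ j, B i j = false) ∨ (∀ j, B i j = true))) ∨
         ((∀ j, (∀ i, A i j = false) ∨ (∀ i, A i j = true)) ∧
          (∀ j, (∀ i, B i j = false) ∨ (∀ i, B i j = true)))) :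
    ∀ k : ℕ, WordRepresentable (Gk A B k) := by
  intro k
  rcases h with ⟨hA, hB⟩ | ⟨hA, hB⟩
  · obtain ⟨f, hf⟩ := ((hasConstantRows_of_forall_or hA).morphIter
      (hasConstantRows_of_forall_or hB) k).exists_eq
    exact splitGraph_wordRepresentable_of_eq_and f (fun _ => true) (by simpa using hf)
  · have hcols := (hasConstantRows_of_forall_or hA).morphIter
      (hasConstantRows_of_forall_or (M := fun j i => B i j) hB) k
    rw [morphIter_transpose] at hcols
    obtain ⟨g, hg⟩ := hcols.exists_eq
    exact splitGraph_wordRepresentable_of_eq_and (fun _ => true) g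
      (fun i j => by simpa using hg j i)
end

section
/- Let A and B be m×n binary matrices, let σ be a permutation of {1,…,n}, and let A* and B* be the matrices obtained from A and B, respectively, by reordering their columns in the order given by σ (the same permutation for both). Then, for every integer k ≥ 0, G^k(A,B) is word-representable if and only if G^k(A*,B*) is word-representable. -/
theorem WordRepresents.map_iso {V V' : Type*} [DecidableEq V] [DecidableEq V']
    {G : SimpleGraph V} {G' : SimpleGraph V'} (e : G ≃g G') {w : List V}
    (hw : WordRepresents w G) : WordRepresents (w.map e) G' := by
  refine ⟨fun v => List.mem_map.2 ⟨e.symm v, hw.1 _, e.apply_symm_apply v⟩, ?_⟩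
  intro x y hxy
  obtain ⟨a, rfl⟩ := e.surjective x
  obtain ⟨b, rfl⟩ := e.surjective y
  have hfilter : (w.map e).filter (fun z => z == e a || z == e b)
      = (w.filter (fun z => z == a || z == b)).map e := by
    rw [List.filter_map]
    congr 1
    exact List.filter_congr fun z _ => by rw [Bool.eq_iff_iff]; simp
  rw [e.map_adj_iff, hw.2 a b (ne_of_apply_ne e hxy), hfilter, List.Chain', List.Chain',
    List.isChain_map]
  simp only [ne_eq, e.injective.eq_iff]

theorem SimpleGraph.Iso.wordRepresentable_iff {V V' : Type*} [DecidableEq V] [DecidableEq V']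
    {G : SimpleGraph V} {G' : SimpleGraph V'} (e : G ≃g G') :
    WordRepresentable G ↔ WordRepresentable G' :=
  ⟨fun ⟨_, hw⟩ => ⟨_, hw.map_iso e⟩, fun ⟨_, hw⟩ => ⟨_, hw.map_iso e.symm⟩⟩

def splitGraphPermColsIso {m n : ℕ} (M : Fin m → Fin n → Bool) (τ : Equiv.Perm (Fin n)) :
    splitGraph (fun i j => M i (τ j)) ≃g splitGraph M where
  toEquiv := Equiv.sumCongr τ (Equiv.refl _)
  map_rel_iff' := by
    rintro (a | a) (b | b) <;> simp [splitGraph]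

def finPowSuccEquiv (n k : ℕ) : Fin (n ^ (k + 1)) ≃ Fin (n ^ k) × Fin n :=
  (finCongr (pow_succ n k)).trans finProdFinEquiv.symm

theorem morphIter_succ_apply {m n : ℕ} (A B : Fin m → Fin n → Bool) (k : ℕ)
    (i : Fin (m ^ (k + 1))) (j : Fin (n ^ (k + 1))) :
    morphIter A B (k + 1) i j =
      if morphIter A B k (finPowSuccEquiv m k i).1 (finPowSuccEquiv n k j).1
      then B (finPowSuccEquiv m k i).2 (finPowSuccEquiv n k j).2
      else A (finPowSuccEquiv m k i).2 (finPowSuccEquiv n k j).2 :=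
  rfl

def digitwisePerm {n : ℕ} (σ : Equiv.Perm (Fin n)) : (k : ℕ) → Equiv.Perm (Fin (n ^ k))
  | 0 => Equiv.refl _
  | k + 1 => (finPowSuccEquiv n k).symm.permCongr ((digitwisePerm σ k).prodCongr σ)

theorem finPowSuccEquiv_digitwisePerm {n : ℕ} (σ : Equiv.Perm (Fin n)) (k : ℕ)
    (j : Fin (n ^ (k + 1))) :
    finPowSuccEquiv n k (digitwisePerm σ (k + 1) j) =
      (digitwisePerm σ k (finPowSuccEquiv n k j).1, σ (finPowSuccEquiv n k j).2) := by
  simp [digitwisePerm, Equiv.permCongr_apply, Prod.map]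

theorem morphIter_permCols {m n : ℕ} (A B : Fin m → Fin n → Bool) (σ : Equiv.Perm (Fin n))
    (k : ℕ) (i : Fin (m ^ k)) (j : Fin (n ^ k)) :
    morphIter (fun i j => A i (σ j)) (fun i j => B i (σ j)) k i j =
      morphIter A B k i (digitwisePerm σ k j) := by
  induction k with
  | zero => rfl
  | succ k ih =>
    rw [morphIter_succ_apply, morphIter_succ_apply, finPowSuccEquiv_digitwisePerm, ih]

theorem stmt8 {m n : ℕ} (A B : Fin m → Fin n → Bool)
    (σ : Equiv.Perm (Fin n)) (k : ℕ) :
    WordRepresentable (Gk A B k) ↔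
      WordRepresentable (Gk (fun i j => A i (σ j)) (fun i j => B i (σ j)) k) := by
  have hmatrix : morphIter (fun i j => A i (σ j)) (fun i j => B i (σ j)) k =
      fun i j => morphIter A B k i (digitwisePerm σ k j) :=
    funext₂ (morphIter_permCols A B σ k)
  rw [Gk, Gk, hmatrix]
  exact (splitGraphPermColsIso _ _).wordRepresentable_iff.symm
end

section
/- Let A = [a_{ij}] and B = [b_{ij}] be m×n binary matrices, let 1 ≤ p₁ < p₂ < ⋯ < p_s ≤ m and 1 ≤ q₁ < q₂ < ⋯ < q_t ≤ n, and let C = [a_{p_i q_j}] and D = [b_{p_i q_j}] be the corresponding s×t submatrices of A and B taken on the same rows and the same columns. For every positive integer k, if G^k(C,D) is not word-representable, then G^k(A,B) is not word-representable. -/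
/-! `G^k(C,D)` is an induced subgraph of `G^k(A,B)`. Write an index of `M^k` as `k` digits, one
per level of the block structure; applying `p` to every row digit and `q` to every column digit
picks out, on each level, the rows and columns of `C` and `D` inside the blocks `A` and `B`, so
`M^k(A,B)` restricted to these indices is exactly `M^k(C,D)`. Word-representability passes to
induced subgraphs: delete from the word the letters of the other vertices. -/

open Function

theorem WordRepresents.comap_s10 {U V : Type*} [DecidableEq U] [DecidableEq V]
    {G : SimpleGraph V} {H : SimpleGraph U} (f : H ↪g G) {w : List V}
    (hw : WordRepresents w G) : WordRepresents (w.filterMap (partialInv f)) H := by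
  have hf : Injective f := f.injective
  refine ⟨fun u => List.mem_filterMap.2 ⟨f u, hw.1 (f u), partialInv_left hf u⟩, fun x y hxy => ?_⟩
  have restrict : ((w.filterMap (partialInv f)).filter (fun z => z == x || z == y)).map f
      = w.filter (fun z => z == f x || z == f y) := by
    rw [List.filter_filterMap, List.map_filterMap, ← List.filterMap_eq_filter]
    congr 1
    funext v
    rcases hv : partialInv f v with _ | u
    · have hx : v ≠ f x := by rintro rfl; simp [partialInv_left hf] at hv
      have hy : v ≠ f y := by rintro rfl; simp [partialInv_left hf] at hv
      exact (Option.guard_eq_none_iff.2 (by simp [hx, hy])).symm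
    · obtain rfl : f u = v := hf.isPartialInv u v |>.1 hv
      simp [Option.filter_some, Option.guard, hf.eq_iff]
  rw [← f.map_adj_iff, hw.2 _ _ (hf.ne hxy), ← restrict]
  exact (List.isChain_map f).trans (by simp only [hf.ne_iff]; rfl)

theorem WordRepresentable.of_embedding {U V : Type*} [DecidableEq U] [DecidableEq V]
    {G : SimpleGraph V} {H : SimpleGraph U} (f : H ↪g G) (hG : WordRepresentable G) :
    WordRepresentable H :=
  let ⟨_, hw⟩ := hG
  ⟨_, hw.comap_s10 f⟩

def splitGraphSubmatrixEmbedding {m n m' n' : ℕ} (M : Fin m → Fin n → Bool)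
    (g : Fin m' ↪ Fin m) (f : Fin n' ↪ Fin n) :
    splitGraph (fun i j => M (g i) (f j)) ↪g splitGraph M where
  toEmbedding := f.sumMap g
  map_rel_iff' {x y} := by
    rcases x with _ | _ <;> rcases y with _ | _ <;> simp [splitGraph, f.injective.eq_iff]

/-- An index of `M^(k+1)` is the index of a block of `M^k` together with a position in that
block. -/
def powSuccEquiv (m k : ℕ) : Fin (m ^ k) × Fin m ≃ Fin (m ^ (k + 1)) :=
  finProdFinEquiv.trans (finCongr (pow_succ m k).symm)

theorem morphIter_succ_powSuccEquiv {m n : ℕ} (A B : Fin m → Fin n → Bool) (k : ℕ)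
    (I : Fin (m ^ k)) (a : Fin m) (J : Fin (n ^ k)) (b : Fin n) :
    morphIter A B (k + 1) (powSuccEquiv m k (I, a)) (powSuccEquiv n k (J, b)) =
      if morphIter A B k I J then B a b else A a b := by
  have hm : 0 < m := a.pos
  have hn : 0 < n := b.pos
  simp only [morphIter, powSuccEquiv, Equiv.trans_apply, finProdFinEquiv_apply_val,
    finCongr_apply, Fin.val_cast]
  simp only [Nat.add_mul_div_left _ _ hm, Nat.add_mul_div_left _ _ hn, Nat.div_eq_of_lt a.isLt,
    Nat.div_eq_of_lt b.isLt, Nat.add_mul_mod_self_left, Nat.mod_eq_of_lt a.isLt,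
    Nat.mod_eq_of_lt b.isLt, zero_add]

/-- Applies `p` to each of the `k` base-`s` digits of an index, giving `k` base-`m` digits. -/
def digitMap {s m : ℕ} (p : Fin s → Fin m) : (k : ℕ) → Fin (s ^ k) → Fin (m ^ k)
  | 0 => finCongr (by simp)
  | k + 1 => fun i => powSuccEquiv m k (Prod.map (digitMap p k) p ((powSuccEquiv s k).symm i))

theorem digitMap_injective {s m : ℕ} {p : Fin s → Fin m} (hp : Injective p) :
    ∀ k, Injective (digitMap p k)
  | 0 => (finCongr _).injective
  | k + 1 => (powSuccEquiv m k).injective.comp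
      (((digitMap_injective hp k).prodMap hp).comp (powSuccEquiv s k).symm.injective)

theorem morphIter_digitMap {m n s t : ℕ} (A B : Fin m → Fin n → Bool)
    (p : Fin s → Fin m) (q : Fin t → Fin n) :
    ∀ k (i : Fin (s ^ k)) (j : Fin (t ^ k)),
      morphIter A B k (digitMap p k i) (digitMap q k j)
        = morphIter (fun i j => A (p i) (q j)) (fun i j => B (p i) (q j)) k i j
  | 0, _, _ => rfl
  | k + 1, i, j => by
    obtain ⟨⟨I, a⟩, rfl⟩ := (powSuccEquiv s k).surjective i
    obtain ⟨⟨J, b⟩, rfl⟩ := (powSuccEquiv t k).surjective j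
    simp only [digitMap, Equiv.symm_apply_apply, Prod.map_apply, morphIter_succ_powSuccEquiv,
      morphIter_digitMap A B p q k]

theorem stmt10_general {m n s t : ℕ} (A B : Fin m → Fin n → Bool)
    (p : Fin s → Fin m) (q : Fin t → Fin n)
    (hp : StrictMono p) (hq : StrictMono q)
    (k : ℕ)
    (h : ¬ WordRepresentable
      (Gk (fun i j => A (p i) (q j)) (fun i j => B (p i) (q j)) k)) :
    ¬ WordRepresentable (Gk A B k) := by
  intro hAB
  have hsub := hAB.of_embedding <| splitGraphSubmatrixEmbedding (morphIter A B k)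
    ⟨digitMap p k, digitMap_injective hp.injective k⟩
    ⟨digitMap q k, digitMap_injective hq.injective k⟩
  simp only [Function.Embedding.coeFn_mk, morphIter_digitMap] at hsub
  exact h hsub

theorem stmt10 {m n s t : ℕ} (A B : Fin m → Fin n → Bool)
    (p : Fin s → Fin m) (q : Fin t → Fin n)
    (hp : StrictMono p) (hq : StrictMono q)
    (k : ℕ) (hk : 1 ≤ k)
    (h : ¬ WordRepresentable
      (Gk (fun i j => A (p i) (q j)) (fun i j => B (p i) (q j)) k)) :
    ¬ WordRepresentable (Gk A B k) :=
  stmt10_general A B p q hp hq k h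
end

section
/- For A = [[1,0],[0,0]] and B = [[0,1],[0,0]], the graph G^2(A,B) is word-representable but the graph G^3(A,B) is not word-representable (so the index of word-representability of this pair is 3). -/
/-!
Two letters `x ≠ y` alternate in `w` iff one of them, say `x`, leads `y`: in every prefix of `w`
the number of `x`'s minus the number of `y`'s is `0` or `1`. In a word representing `G^3(A, B)`
the clique vertices pairwise alternate, so "leads" is a tournament on them, and comparing counts
along a chain `u, v, z` of clique vertices shows that the neighborhood of each independent
vertex, or its complement, is convex for it. Rows `0, 2, 4` of `M^3(A, B)` are `10010110`,
`10101010`, `01100110`; whichever of each row or its complement is convex, the three sets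
pairwise meet in two points with one point `m` in common, so `m` would have three immediate
neighbors in a tournament, which is impossible. For `G^2(A, B)` an explicit word works.
-/

namespace List

variable {α : Type*} [DecidableEq α]

def Leads (w : List α) (x y : α) : Prop :=
  ∀ p, (w.take p).count y ≤ (w.take p).count x ∧ (w.take p).count x ≤ (w.take p).count y + 1

def StrictLeads (w : List α) (x y : α) : Prop := x ≠ y ∧ w.Leads x y

theorem leads_cons_iff {a x y : α} {w : List α} :
    (a :: w).Leads x y ↔ ∀ p, (a :: w.take p).count y ≤ (a :: w.take p).count x ∧
      (a :: w.take p).count x ≤ (a :: w.take p).count y + 1 := by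
  refine ⟨fun h p => h (p + 1), fun h p => ?_⟩
  cases p with
  | zero => simp
  | succ p => exact h p

theorem leads_cons_self {x y : α} {w : List α} (hxy : x ≠ y) :
    (x :: w).Leads x y ↔ w.Leads y x := by
  simp only [leads_cons_iff, count_cons_self, count_cons_of_ne hxy]
  exact forall_congr' fun p => by omega

theorem not_leads_cons_right {x y : α} {w : List α} (hxy : x ≠ y) : ¬ (y :: w).Leads x y :=
  fun h => by simpa [hxy.symm] using (h 1).1

theorem leads_cons_of_ne {a x y : α} {w : List α} (hax : a ≠ x) (hay : a ≠ y) :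
    (a :: w).Leads x y ↔ w.Leads x y := by
  simp only [leads_cons_iff, count_cons_of_ne hax, count_cons_of_ne hay]
  rfl

theorem filter_eq_or_eq_comm (x y : α) (w : List α) :
    w.filter (fun z => z == x || z == y) = w.filter (fun z => z == y || z == x) := by
  simp only [Bool.or_comm]

theorem isChain_filter_and_head?_ne_iff_leads {x y : α} (hxy : x ≠ y) (w : List α) :
    (w.filter (fun z => z == x || z == y)).IsChain (· ≠ ·) ∧
      (w.filter (fun z => z == x || z == y)).head? ≠ some y ↔ w.Leads x y := by
  induction w generalizing x y with
  | nil => simp [Leads]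
  | cons a w ih =>
    by_cases hax : a = x
    · subst hax
      rw [filter_cons_of_pos (by simp), leads_cons_self hxy, ← ih hxy.symm,
        filter_eq_or_eq_comm y a, isChain_cons, head?_cons]
      generalize (w.filter (fun z => z == a || z == y)).head? = o
      rcases o with _ | b <;> simp [hxy, eq_comm, and_comm]
    by_cases hay : a = y
    · subst hay
      simp [not_leads_cons_right hxy]
    · rw [filter_cons_of_neg (by simp [hax, hay]), leads_cons_of_ne hax hay, ih hxy]

theorem isChain_filter_iff_leads_or_leads {x y : α} (hxy : x ≠ y) (w : List α) :
    (w.filter (fun z => z == x || z == y)).IsChain (· ≠ ·) ↔ w.Leads x y ∨ w.Leads y x := by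
  rw [← isChain_filter_and_head?_ne_iff_leads hxy,
    ← isChain_filter_and_head?_ne_iff_leads hxy.symm, filter_eq_or_eq_comm y x]
  have : ¬ ((w.filter (fun z => z == x || z == y)).head? = some y ∧
      (w.filter (fun z => z == x || z == y)).head? = some x) :=
    fun ⟨hy, hx⟩ => hxy (Option.some_injective _ (hx.symm.trans hy))
  tauto

theorem eq_of_count_take_eq {x y : α} {w : List α} (hx : x ∈ w)
    (h : ∀ p, (w.take p).count x = (w.take p).count y) : x = y := by
  obtain ⟨i, hi, rfl⟩ := getElem_of_mem hx
  by_contra hne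
  have step := h (i + 1)
  rw [take_add_one, getElem?_eq_getElem hi] at step
  simp only [Option.toList_some, count_append, count_singleton, beq_self_eq_true, h i] at step
  simp [hne] at step

end List

def RelConvex {α : Type*} (r : α → α → Prop) (s : Set α) : Prop :=
  ∀ ⦃u v z⦄, r u v → r v z → u ∈ s → z ∈ s → v ∈ s

section RelConvex

variable {α : Type*} {r : α → α → Prop}

theorem RelConvex.not_between_of_inter_eq_pair (irrefl : ∀ a, ¬ r a a) {s t : Set α}
    (hs : RelConvex r s) (ht : RelConvex r t) {p q : α} (hst : s ∩ t = {p, q}) (v : α) :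
    ¬ (r p v ∧ r v q) := by
  rintro ⟨hpv, hvq⟩
  have hp : p ∈ s ∩ t := hst ▸ Set.mem_insert p {q}
  have hq : q ∈ s ∩ t := hst ▸ Set.mem_insert_of_mem p rfl
  have hv : v ∈ s ∩ t := ⟨hs hpv hvq hp.1 hq.1, ht hpv hvq hp.2 hq.2⟩
  rw [hst] at hv
  rcases hv with rfl | rfl
  exacts [irrefl v hpv, irrefl v hvq]

theorem false_of_three_immediate_neighbors (total : ∀ a b, a ≠ b → r a b ∨ r b a)
    {m x y z : α} (hxm : x ≠ m) (hym : y ≠ m) (hzm : z ≠ m) (hxy : x ≠ y) (hxz : x ≠ z)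
    (hyz : y ≠ z)
    (gap : ∀ a ∈ ({x, y, z} : Set α), ∀ v, ¬ (r m v ∧ r v a) ∧ ¬ (r a v ∧ r v m)) :
    False := by
  have same_side : ∀ a ∈ ({x, y, z} : Set α), ∀ b ∈ ({x, y, z} : Set α), a ≠ b →
      ¬ ((r a m ∧ r b m) ∨ (r m a ∧ r m b)) := by
    rintro a ha b hb hab (⟨ham, hbm⟩ | ⟨hma, hmb⟩) <;> rcases total a b hab with h | h
    exacts [(gap a ha b).2 ⟨h, hbm⟩, (gap b hb a).2 ⟨h, ham⟩,
      (gap b hb a).1 ⟨hma, h⟩, (gap a ha b).1 ⟨hmb, h⟩]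
  rcases total x m hxm with hx | hx <;> rcases total y m hym with hy | hy <;>
    rcases total z m hzm with hz | hz
  all_goals first
    | exact same_side x (by simp) y (by simp) hxy (by tauto)
    | exact same_side x (by simp) z (by simp) hxz (by tauto)
    | exact same_side y (by simp) z (by simp) hyz (by tauto)

theorem false_of_three_inter_eq_pair (irrefl : ∀ a, ¬ r a a)
    (total : ∀ a b, a ≠ b → r a b ∨ r b a) {s t u : Set α}
    (hs : RelConvex r s) (ht : RelConvex r t) (hu : RelConvex r u) {m x y z : α}
    (hd : [m, x, y, z].Nodup) (hst : s ∩ t = {m, x}) (hsu : s ∩ u = {m, y})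
    (htu : t ∩ u = {m, z}) : False := by
  have gap : ∀ {a} {s t : Set α}, RelConvex r s → RelConvex r t → s ∩ t = {m, a} →
      ∀ v, ¬ (r m v ∧ r v a) ∧ ¬ (r a v ∧ r v m) := fun hs ht h v =>
    ⟨hs.not_between_of_inter_eq_pair irrefl ht h v,
      hs.not_between_of_inter_eq_pair irrefl ht (h.trans (Set.pair_comm m _)) v⟩
  simp only [List.nodup_cons, List.mem_cons, List.not_mem_nil, or_false, not_or] at hd
  obtain ⟨⟨hmx, hmy, hmz⟩, ⟨hxy, hxz⟩, hyz, -⟩ := hd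
  refine false_of_three_immediate_neighbors total (Ne.symm hmx) (Ne.symm hmy) (Ne.symm hmz)
    hxy hxz hyz ?_
  simp only [Set.mem_insert_iff, Set.mem_singleton_iff, forall_eq_or_imp, forall_eq]
  exact ⟨gap hs ht hst, gap hs hu hsu, gap ht hu htu⟩

end RelConvex

namespace WordRepresents

variable {V : Type*} [DecidableEq V] {G : SimpleGraph V} {w : List V}

theorem adj_iff (hw : WordRepresents w G) {x y : V} (hxy : x ≠ y) :
    G.Adj x y ↔ w.Leads x y ∨ w.Leads y x :=
  (hw.2 x y hxy).trans (List.isChain_filter_iff_leads_or_leads hxy w)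

theorem eq_of_count_take_eq (hw : WordRepresents w G) {x y : V}
    (h : ∀ p, (w.take p).count x = (w.take p).count y) : x = y :=
  List.eq_of_count_take_eq (hw.1 x) h

variable {ι : Type*} {f : ι → V} {c : V}

theorem strictLeads_total (hw : WordRepresents w G) (hf : ∀ i j, i ≠ j → G.Adj (f i) (f j))
    {i j : ι} (hij : i ≠ j) :
    (f ⁻¹'o w.StrictLeads) i j ∨ (f ⁻¹'o w.StrictLeads) j i := by
  have hne := G.ne_of_adj (hf i j hij)
  rcases (hw.adj_iff hne).mp (hf i j hij) with h | h
  exacts [.inl ⟨hne, h⟩, .inr ⟨hne.symm, h⟩]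

theorem mem_preimage_neighborSet_iff (hw : WordRepresents w G) (hc : ∀ i, f i ≠ c) (i : ι) :
    i ∈ f ⁻¹' G.neighborSet c ↔ w.Leads c (f i) ∨ w.Leads (f i) c :=
  hw.adj_iff (hc i).symm

theorem leads_of_not_relConvex (hw : WordRepresents w G) (hc : ∀ i, f i ≠ c) {u v z : ι}
    (huv : (f ⁻¹'o w.StrictLeads) u v) (hvz : (f ⁻¹'o w.StrictLeads) v z)
    (hu : u ∈ f ⁻¹' G.neighborSet c) (hz : z ∈ f ⁻¹' G.neighborSet c)
    (hv : v ∉ f ⁻¹' G.neighborSet c) : w.Leads (f u) c ∧ w.Leads c (f z) := by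
  -- the counts of `f v` lie between those of `f z` and `f u`
  rw [hw.mem_preimage_neighborSet_iff hc] at hu hz hv
  obtain ⟨-, huv⟩ := huv
  obtain ⟨-, hvz⟩ := hvz
  rcases hu with hu | hu <;> rcases hz with hz | hz
  · exact absurd (.inl fun p => by
      have := hu p; have := huv p; have := hvz p; have := hz p; omega) hv
  · exact absurd (hw.eq_of_count_take_eq fun p => by
      have := hu p; have := huv p; have := hvz p; have := hz p; omega) (hc u).symm
  · exact ⟨hu, hz⟩
  · exact absurd (.inr fun p => by
      have := hu p; have := huv p; have := hvz p; have := hz p; omega) hv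

theorem relConvex_compl_of_leads (hw : WordRepresents w G)
    (hf : ∀ i j, i ≠ j → G.Adj (f i) (f j)) (hc : ∀ i, f i ≠ c) {u z : ι}
    (hu : w.Leads (f u) c) (hz : w.Leads c (f z)) :
    RelConvex (f ⁻¹'o w.StrictLeads) (f ⁻¹' G.neighborSet c)ᶜ := by
  intro u' v' z' huv' hvz' hu' hz' hv'
  rw [Set.mem_compl_iff, hw.mem_preimage_neighborSet_iff hc] at hu' hz'
  rw [hw.mem_preimage_neighborSet_iff hc] at hv'
  obtain ⟨-, huv'⟩ := huv'
  obtain ⟨-, hvz'⟩ := hvz'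
  rcases hv' with hv' | hv'
  · have hz'u : z' ≠ u := by rintro rfl; exact hz' (.inr hu)
    rcases hw.strictLeads_total hf hz'u.symm with ⟨-, h⟩ | ⟨-, h⟩
    · exact hz' (.inl fun p => by
        have := hu p; have := h p; have := hv' p; have := hvz' p; omega)
    · exact hc u (hw.eq_of_count_take_eq fun p => by
        have := hu p; have := h p; have := hv' p; have := hvz' p; omega)
  · have hu'z : u' ≠ z := by rintro rfl; exact hu' (.inl hz)
    rcases hw.strictLeads_total hf hu'z with ⟨-, h⟩ | ⟨-, h⟩
    · exact hu' (.inr fun p => by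
        have := hz p; have := h p; have := hv' p; have := huv' p; omega)
    · exact hc z (hw.eq_of_count_take_eq fun p => by
        have := hz p; have := h p; have := hv' p; have := huv' p; omega)

theorem relConvex_or_relConvex_compl (hw : WordRepresents w G)
    (hf : ∀ i j, i ≠ j → G.Adj (f i) (f j)) (hc : ∀ i, f i ≠ c) :
    RelConvex (f ⁻¹'o w.StrictLeads) (f ⁻¹' G.neighborSet c) ∨
      RelConvex (f ⁻¹'o w.StrictLeads) (f ⁻¹' G.neighborSet c)ᶜ := by
  by_cases h : RelConvex (f ⁻¹'o w.StrictLeads) (f ⁻¹' G.neighborSet c)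
  · exact .inl h
  · simp only [RelConvex, not_forall] at h
    obtain ⟨u, v, z, huv, hvz, hu, hz, hv⟩ := h
    obtain ⟨hu, hz⟩ := hw.leads_of_not_relConvex hc huv hvz hu hz hv
    exact .inr (hw.relConvex_compl_of_leads hf hc hu hz)

end WordRepresents

section SplitGraph

variable {m n : ℕ} (M : Fin m → Fin n → Bool)

@[simp] theorem splitGraph_adj_inl_inl {i j : Fin n} :
    (splitGraph M).Adj (.inl i) (.inl j) ↔ i ≠ j := by simp [splitGraph]

theorem splitGraph_adj_inl_of_ne {M : Fin m → Fin n → Bool} {i j : Fin n} (h : i ≠ j) :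
    (splitGraph M).Adj (.inl i) (.inl j) := (splitGraph_adj_inl_inl M).mpr h

@[simp] theorem splitGraph_adj_inl_inr {j : Fin n} {i : Fin m} :
    (splitGraph M).Adj (.inl j) (.inr i) ↔ M i j = true := by simp [splitGraph]

@[simp] theorem splitGraph_adj_inr_inl {j : Fin n} {i : Fin m} :
    (splitGraph M).Adj (.inr i) (.inl j) ↔ M i j = true := by simp [splitGraph]

theorem splitGraph_not_adj_inr_inr {i j : Fin m} : ¬ (splitGraph M).Adj (.inr i) (.inr j) := by
  simp [splitGraph]

instance : DecidableRel (splitGraph M).Adj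
  | .inl _, .inl _ => decidable_of_iff' _ (splitGraph_adj_inl_inl M)
  | .inl _, .inr _ => decidable_of_iff' _ (splitGraph_adj_inl_inr M)
  | .inr _, .inl _ => decidable_of_iff' _ (splitGraph_adj_inr_inl M)
  | .inr _, .inr _ => isFalse (splitGraph_not_adj_inr_inr M)

theorem splitGraph_preimage_neighborSet_inr (i : Fin m) :
    Sum.inl ⁻¹' (splitGraph M).neighborSet (.inr i) = {j | M i j = true} := by
  ext j
  simp

end SplitGraph

theorem false_of_rows_relConvex {r : Fin (2 ^ 3) → Fin (2 ^ 3) → Prop}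
    (irrefl : ∀ a, ¬ r a a) (total : ∀ a b, a ≠ b → r a b ∨ r b a)
    (h : ∀ k, RelConvex r {j | morphIter ![![true, false], ![false, false]]
        ![![false, true], ![false, false]] 3 k j = true} ∨
      RelConvex r {j | morphIter ![![true, false], ![false, false]]
        ![![false, true], ![false, false]] 3 k j = true}ᶜ) : False := by
  have key (m x y z : Fin (2 ^ 3)) {s t u : Set (Fin (2 ^ 3))} (hs : RelConvex r s)
      (ht : RelConvex r t) (hu : RelConvex r u) (hd : [m, x, y, z].Nodup ∧
        ∀ j, (j ∈ s ∩ t ↔ j ∈ ({m, x} : Set _)) ∧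
          (j ∈ s ∩ u ↔ j ∈ ({m, y} : Set _)) ∧ (j ∈ t ∩ u ↔ j ∈ ({m, z} : Set _))) : False :=
    false_of_three_inter_eq_pair irrefl total hs ht hu hd.1 (Set.ext fun j => (hd.2 j).1)
      (Set.ext fun j => (hd.2 j).2.1) (Set.ext fun j => (hd.2 j).2.2)
  rcases h 0 with h0 | h0 <;> rcases h 2 with h2 | h2 <;> rcases h 4 with h4 | h4
  · exact key 6 0 5 2 h0 h2 h4 (by decide)
  · exact key 0 6 3 4 h0 h2 h4 (by decide)
  · exact key 5 3 6 1 h0 h2 h4 (by decide)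
  · exact key 3 5 0 7 h0 h2 h4 (by decide)
  · exact key 2 4 1 6 h0 h2 h4 (by decide)
  · exact key 4 2 7 0 h0 h2 h4 (by decide)
  · exact key 1 7 2 5 h0 h2 h4 (by decide)
  · exact key 7 1 4 3 h0 h2 h4 (by decide)

set_option linter.deprecated false in
theorem wordRepresents_Gk_two :
    WordRepresents [.inl 0, .inl 2, .inr 2, .inl 1, .inl 3, .inl 0, .inr 0, .inl 2, .inl 1,
      .inr 0, .inl 3, .inr 2, .inr 1, .inr 1, .inr 3, .inr 3]
      (Gk ![![true, false], ![false, false]] ![![false, true], ![false, false]] 2) := by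
  refine ⟨by rintro (v | v) <;> fin_cases v <;> simp, ?_⟩
  unfold Gk List.Chain'
  decide

theorem stmt12 :
    WordRepresentable
      (Gk ![![true, false], ![false, false]] ![![false, true], ![false, false]] 2) ∧
    ¬ WordRepresentable
      (Gk ![![true, false], ![false, false]] ![![false, true], ![false, false]] 3) := by
  refine ⟨⟨_, wordRepresents_Gk_two⟩, fun ⟨w, hw⟩ => ?_⟩
  refine false_of_rows_relConvex (r := Sum.inl ⁻¹'o w.StrictLeads) (fun _ h => h.1 rfl)
    (fun _ _ hab => hw.strictLeads_total (fun _ _ => splitGraph_adj_inl_of_ne) hab) fun k => ?_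
  simpa only [Gk, splitGraph_preimage_neighborSet_inr] using
    hw.relConvex_or_relConvex_compl (fun _ _ => splitGraph_adj_inl_of_ne) (c := .inr k)
      fun i => Sum.inl_ne_inr
end
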